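/- arXiv:2212.13770 — 12 statements merged into one kernel-verified Lean document; each statement's English description precedes it below -/
import Mathlib

section
/- For any nontrivial finite group G, the geometric mean of the element orders of G divided by |G| satisfies 0 < l(G) ≤ ψ''(G) < 1, where l(G) = ρ(G)^(1/|G|)/|G| with ρ(G) the product of the orders of all elements of G, and ψ''(G) = ψ(G)/|G|^2 with ψ(G) the sum of the orders of all elements of G. -/
noncomputable def lfun (G : Type*) [Group G] [Fintype G] : ℝ :=
  ((∏ g : G, orderOf g : ℕ) : ℝ) ^ ((1 : ℝ) / (Fintype.card G : ℝ)) / (Fintype.card G : ℝ)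

noncomputable def psi2 (G : Type*) [Group G] [Fintype G] : ℝ :=
  ((∑ g : G, orderOf g : ℕ) : ℝ) / ((Fintype.card G : ℝ)) ^ 2

/-! The geometric mean of the element orders is at most their arithmetic mean, and every order is
at most `|G|`, with strict inequality at the identity as soon as `|G| > 1`. -/

theorem Real.prod_rpow_one_div_card_le_sum_div_card {ι : Type*} (s : Finset ι) (hs : s.Nonempty)
    (z : ι → ℝ) (hz : ∀ i ∈ s, 0 ≤ z i) :
    (∏ i ∈ s, z i) ^ ((1 : ℝ) / s.card) ≤ (∑ i ∈ s, z i) / s.card := by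
  have h := Real.geom_mean_le_arith_mean s (fun _ ↦ 1) z (fun _ _ ↦ zero_le_one)
    (by simpa using hs.card_pos) hz
  simpa [one_div] using h

theorem sum_orderOf_lt_card_sq (G : Type*) [Group G] [Fintype G] [Nontrivial G] :
    ∑ g : G, orderOf g < Fintype.card G ^ 2 := by
  calc ∑ g : G, orderOf g < ∑ _g : G, Fintype.card G :=
        Finset.sum_lt_sum (fun g _ ↦ orderOf_le_card_univ)
          ⟨1, Finset.mem_univ _, by simpa using Fintype.one_lt_card⟩
    _ = Fintype.card G ^ 2 := by simp [sq]

theorem lfun_pos (G : Type*) [Group G] [Fintype G] : 0 < lfun G := by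
  have hprod : 0 < ∏ g : G, orderOf g := Finset.prod_pos fun g _ ↦ orderOf_pos g
  unfold lfun
  positivity

theorem lfun_le_psi2 (G : Type*) [Group G] [Fintype G] : lfun G ≤ psi2 G := by
  have hcard : (0 : ℝ) < Fintype.card G := by exact_mod_cast Fintype.card_pos
  have amgm := Real.prod_rpow_one_div_card_le_sum_div_card Finset.univ Finset.univ_nonempty
    (fun g : G ↦ (orderOf g : ℝ)) (fun g _ ↦ Nat.cast_nonneg _)
  rw [Finset.card_univ, ← Nat.cast_prod, ← Nat.cast_sum] at amgm
  unfold lfun psi2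
  rw [sq, ← div_div]
  exact div_le_div_of_nonneg_right amgm hcard.le

theorem psi2_lt_one (G : Type*) [Group G] [Fintype G] [Nontrivial G] : psi2 G < 1 := by
  unfold psi2
  rw [div_lt_one (by positivity)]
  exact_mod_cast sum_orderOf_lt_card_sq G

theorem stmt0 (G : Type*) [Group G] [Fintype G] [Nontrivial G] :
    0 < lfun G ∧ lfun G ≤ psi2 G ∧ psi2 G < 1 :=
  ⟨lfun_pos G, lfun_le_psi2 G, psi2_lt_one G⟩
end

section
/- Let G be a finite group and N a nontrivial proper normal subgroup of G. Then l(G) < l(G/N), where l(G) = ρ(G)^(1/|G|)/|G| and ρ(G) is the product of the orders of all elements of G. -/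
/-!
For `x ∈ G` with `k` the order of `xN` in `G/N`, the element `x ^ k` lies in `N`, so the order
of `x` divides `k * |N|`; at `x = 1` the resulting bound `o(x) ≤ o(xN) |N|` is strict because
`N` is nontrivial. Every coset has `|N|` elements, so multiplying over `G` gives
`ρ(G) < ρ(G/N) ^ |N| * |N| ^ |G|`, and taking `|G|`-th roots and dividing by `|G| = |G/N| |N|`
gives `l(G) < l(G/N)`.
-/

open Finset

namespace QuotientGroup

variable {G : Type*} [Group G] (N : Subgroup G)

theorem prod_comp_mk {M : Type*} [CommMonoid M] [Fintype G] [Fintype (G ⧸ N)]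
    (f : G ⧸ N → M) : ∏ x : G, f x = (∏ q : G ⧸ N, f q) ^ Nat.card N := by
  classical
  rw [Fintype.prod_equiv Subgroup.groupEquivQuotientProdSubgroup (fun x : G => f x)
    (fun p => f p.1) (fun _ => rfl), Fintype.prod_prod_type]
  simp only [prod_const, card_univ, prod_pow, Nat.card_eq_fintype_card]

variable [N.Normal]

theorem orderOf_dvd_orderOf_mk_mul_card (x : G) :
    orderOf x ∣ orderOf (x : G ⧸ N) * Nat.card N := by
  have hmem : x ^ orderOf (x : G ⧸ N) ∈ N := by
    rw [← eq_one_iff, mk_pow, pow_orderOf_eq_one]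
  apply orderOf_dvd_of_pow_eq_one
  rw [pow_mul]
  exact congrArg Subtype.val (pow_card_eq_one' (x := (⟨_, hmem⟩ : N)))

theorem prod_orderOf_lt [Fintype G] [Fintype (G ⧸ N)] (hN : N ≠ ⊥) :
    ∏ x : G, orderOf x <
      (∏ q : G ⧸ N, orderOf q) ^ Nat.card N * Nat.card N ^ Fintype.card G := by
  have hcard : 1 < Nat.card N := N.one_lt_card_iff_ne_bot.mpr hN
  calc ∏ x : G, orderOf x < ∏ x : G, orderOf (x : G ⧸ N) * Nat.card N := by
        refine prod_lt_prod (fun x _ => orderOf_pos x)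
          (fun x _ => Nat.le_of_dvd (Nat.mul_pos (orderOf_pos _) Nat.card_pos)
            (orderOf_dvd_orderOf_mk_mul_card N x))
          ⟨1, mem_univ _, by simpa using hcard⟩
    _ = _ := by rw [prod_mul_distrib, prod_comp_mk, prod_const, card_univ]

end QuotientGroup

theorem rpow_one_div_div_lt_of_lt_pow_mul_pow {a b q n : ℕ} (hq : 0 < q) (hn : 0 < n)
    (h : a < b ^ n * n ^ (q * n)) :
    (a : ℝ) ^ ((1 : ℝ) / ((q * n : ℕ) : ℝ)) / ((q * n : ℕ) : ℝ) <
      (b : ℝ) ^ ((1 : ℝ) / q) / q := by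
  have hqn : (0 : ℝ) < ((q * n : ℕ) : ℝ) := by positivity
  have hroot : ((b ^ n * n ^ (q * n) : ℕ) : ℝ) ^ ((1 : ℝ) / ((q * n : ℕ) : ℝ)) =
      (b : ℝ) ^ ((1 : ℝ) / q) * n := by
    rw [Nat.cast_mul, Nat.cast_pow, Nat.cast_pow, Real.mul_rpow (by positivity) (by positivity),
      ← Real.rpow_natCast (b : ℝ), ← Real.rpow_natCast (n : ℝ), ← Real.rpow_mul (by positivity),
      ← Real.rpow_mul (by positivity)]
    congr 2
    · field_simp
      push_cast
      ring
    · rw [mul_one_div_cancel hqn.ne', Real.rpow_one]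
  calc (a : ℝ) ^ ((1 : ℝ) / ((q * n : ℕ) : ℝ)) / ((q * n : ℕ) : ℝ)
      < (b : ℝ) ^ ((1 : ℝ) / q) * n / ((q * n : ℕ) : ℝ) := by
        rw [← hroot]
        gcongr
    _ = (b : ℝ) ^ ((1 : ℝ) / q) / q := by
        rw [Nat.cast_mul, mul_div_mul_right _ _ (by positivity)]

theorem stmt1_general (G : Type*) [Group G] [Fintype G] (N : Subgroup G) [N.Normal]
    [Fintype (G ⧸ N)] (h1 : N ≠ ⊥) :
    lfun G < lfun (G ⧸ N) := by
  have hcard : Fintype.card G = Fintype.card (G ⧸ N) * Nat.card N := by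
    simpa only [Nat.card_eq_fintype_card] using N.card_eq_card_quotient_mul_card_subgroup
  have hlt := QuotientGroup.prod_orderOf_lt N h1
  rw [hcard] at hlt
  unfold lfun
  rw [hcard]
  exact rpow_one_div_div_lt_of_lt_pow_mul_pow Fintype.card_pos Nat.card_pos hlt

theorem stmt1 (G : Type*) [Group G] [Fintype G] (N : Subgroup G) [N.Normal]
    [Fintype (G ⧸ N)] (h1 : N ≠ ⊥) (h2 : N ≠ ⊤) :
    lfun G < lfun (G ⧸ N) :=
  stmt1_general G N h1
end

section
/- If G is a finite cyclic group and K is a proper subgroup of G, then l(G) < l(K), where l(H) = ρ(H)^(1/|H|)/|H| and ρ(H) is the product of the orders of all elements of H. -/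
open Finset

theorem orderOf_le_mul_orderOf_pow {M : Type*} [Monoid M] (x : M) {n : ℕ} (hn : n ≠ 0) :
    orderOf x ≤ n * orderOf (x ^ n) := by
  rw [orderOf_pow' x hn, mul_comm]
  calc orderOf x = orderOf x / (orderOf x).gcd n * (orderOf x).gcd n :=
        (Nat.div_mul_cancel (Nat.gcd_dvd_left _ _)).symm
    _ ≤ orderOf x / (orderOf x).gcd n * n :=
        Nat.mul_le_mul_left _ (Nat.gcd_le_right _ (Nat.pos_of_ne_zero hn))

theorem MonoidHom.prod_comp_of_surjective {G H M : Type*} [Group G] [Group H] [Fintype G]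
    [Fintype H] [CommMonoid M] {f : G →* H} (hf : Function.Surjective f) (φ : H → M) :
    ∏ g, φ (f g) = (∏ h, φ h) ^ Nat.card f.ker := by
  classical
  rw [← Fintype.prod_fiberwise' f, ← prod_pow]
  refine Fintype.prod_congr _ _ fun h => ?_
  rw [prod_const, card_univ, ← Nat.card_eq_fintype_card]
  exact congrArg _ (Nat.card_congr (f.fiberEquivKerOfSurjective hf h))

theorem MonoidHom.prod_comp_of_range_eq {G H M : Type*} [Group G] [Group H] [Fintype G]
    [CommMonoid M] {f : G →* H} {K : Subgroup H} [Fintype K] (hf : f.range = K) (φ : H → M) :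
    ∏ g, φ (f g) = (∏ h : K, φ h) ^ Nat.card f.ker := by
  subst hf
  rw [← f.ker_rangeRestrict, ← MonoidHom.prod_comp_of_surjective f.rangeRestrict_surjective]
  rfl

theorem IsCyclic.ker_powMonoidHom_card {G : Type*} [CommGroup G] [IsCyclic G] [Finite G]
    (H : Subgroup G) : (powMonoidHom (Nat.card H) : G →* G).ker = H := by
  symm
  refine Subgroup.eq_of_le_of_card_ge (fun x hx => ?_) ?_
  · exact congrArg Subtype.val (pow_card_eq_one' (x := (⟨x, hx⟩ : H)))
  · rw [IsCyclic.card_powMonoidHom_ker, Nat.gcd_eq_right (Subgroup.card_subgroup_dvd_card H)]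

theorem IsCyclic.range_powMonoidHom_index {G : Type*} [CommGroup G] [IsCyclic G] [Finite G]
    (H : Subgroup G) : (powMonoidHom H.index : G →* G).range = H := by
  have hcard : Nat.card (powMonoidHom H.index : G →* G).range = Nat.card H := by
    rw [IsCyclic.card_powMonoidHom_range, Nat.gcd_eq_right H.index_dvd_card,
      ← H.card_mul_index, Nat.mul_div_cancel _ (Nat.pos_of_ne_zero H.index_ne_zero_of_finite)]
  calc _ = (powMonoidHom (Nat.card (powMonoidHom H.index : G →* G).range) : G →* G).ker :=
        (IsCyclic.ker_powMonoidHom_card _).symm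
    _ = H := by rw [hcard, IsCyclic.ker_powMonoidHom_card]

theorem prod_orderOf_lt_pow_mul_prod_orderOf_pow {G : Type*} [Group G] [Fintype G] {m : ℕ}
    (hm : 1 < m) : ∏ g : G, orderOf g < m ^ Fintype.card G * ∏ g : G, orderOf (g ^ m) := by
  rw [← card_univ, ← prod_const, ← prod_mul_distrib]
  refine prod_lt_prod (fun g _ => orderOf_pos g)
    (fun g _ => orderOf_le_mul_orderOf_pow g (by omega)) ⟨1, mem_univ _, ?_⟩
  simpa using hm

theorem IsCyclic.prod_orderOf_pow_index {G : Type*} [Group G] [Fintype G] [IsCyclic G]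
    (K : Subgroup G) [Fintype K] :
    ∏ g : G, orderOf (g ^ K.index) = (∏ h : K, orderOf h) ^ K.index := by
  let _ : CommGroup G := IsCyclic.commGroup
  have hker : Nat.card (powMonoidHom K.index : G →* G).ker = K.index := by
    rw [IsCyclic.card_powMonoidHom_ker, Nat.gcd_eq_right K.index_dvd_card]
  simp_rw [← Subgroup.orderOf_coe]
  simpa only [powMonoidHom_apply, hker] using
    MonoidHom.prod_comp_of_range_eq (IsCyclic.range_powMonoidHom_index K) orderOf

theorem rpow_one_div_div_lt_of_lt_pow_mul {a b : ℝ} {m k n : ℕ} (ha : 0 ≤ a) (hb : 0 ≤ b)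
    (hm : 0 < m) (hk : 0 < k) (hn : m * k = n) (h : a < (m : ℝ) ^ n * b ^ m) :
    a ^ (1 / (n : ℝ)) / n < b ^ (1 / (k : ℝ)) / k := by
  have hmk : (n : ℝ) = m * k := by rw [← hn]; push_cast; ring
  have hm' : (0 : ℝ) < m := Nat.cast_pos.2 hm
  have hk' : (0 : ℝ) < k := Nat.cast_pos.2 hk
  have hn' : (0 : ℝ) < n := by rw [hmk]; positivity
  have hroot : ((m : ℝ) ^ n * b ^ m) ^ (1 / (n : ℝ)) = m * b ^ (1 / (k : ℝ)) := by
    rw [Real.mul_rpow (by positivity) (by positivity), one_div,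
      Real.pow_rpow_inv_natCast hm'.le (Nat.cast_pos.1 hn').ne', ← Real.rpow_natCast_mul hb, hmk]
    congr 2
    field_simp
  calc a ^ (1 / (n : ℝ)) / n < ((m : ℝ) ^ n * b ^ m) ^ (1 / (n : ℝ)) / n := by
        gcongr
    _ = b ^ (1 / (k : ℝ)) / k := by
        rw [hroot, hmk]
        field_simp

theorem stmt3 (G : Type*) [Group G] [Fintype G] [IsCyclic G] (K : Subgroup G)
    [Fintype K] (hK : K ≠ ⊤) :
    lfun G < lfun K := by
  have hindex : 1 < K.index := K.one_lt_index_of_ne_top hK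
  have hρ : ∏ g : G, orderOf g < K.index ^ Fintype.card G * (∏ h : K, orderOf h) ^ K.index := by
    rw [← IsCyclic.prod_orderOf_pow_index]
    exact prod_orderOf_lt_pow_mul_prod_orderOf_pow hindex
  have hcard : K.index * Fintype.card K = Fintype.card G := by
    simpa only [Nat.card_eq_fintype_card] using K.index_mul_card
  exact rpow_one_div_div_lt_of_lt_pow_mul (Nat.cast_nonneg _) (Nat.cast_nonneg _)
    (zero_lt_one.trans hindex) Fintype.card_pos hcard (by exact_mod_cast hρ)
end

section
/- If G and H are finite groups with coprime orders, then l(G × H) = l(G) · l(H), where l(G) = ρ(G)^(1/|G|)/|G| and ρ(G) is the product of the orders of all elements of G. -/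
theorem Prod.orderOf_mk_of_coprime {α β : Type*} [Monoid α] [Monoid β] {a : α} {b : β}
    (h : (orderOf a).Coprime (orderOf b)) : orderOf (a, b) = orderOf a * orderOf b := by
  rw [Prod.orderOf_mk, h.lcm_eq_mul]

theorem prod_orderOf_prod_of_coprime_card {G H : Type*} [Group G] [Fintype G] [Group H]
    [Fintype H] (h : (Fintype.card G).Coprime (Fintype.card H)) :
    ∏ x : G × H, orderOf x =
      (∏ g : G, orderOf g) ^ Fintype.card H * (∏ k : H, orderOf k) ^ Fintype.card G := by
  have horderOf (g : G) (k : H) : orderOf (g, k) = orderOf g * orderOf k :=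
    Prod.orderOf_mk_of_coprime <|
      (h.coprime_dvd_left orderOf_dvd_card).coprime_dvd_right orderOf_dvd_card
  simp only [Fintype.prod_prod_type, horderOf, Finset.prod_mul_distrib, Finset.prod_const,
    Finset.card_univ, Finset.prod_pow]

theorem Real.pow_mul_pow_rpow_one_div_mul {a b : ℝ} (ha : 0 ≤ a) (hb : 0 ≤ b) {m n : ℕ}
    (hm : m ≠ 0) (hn : n ≠ 0) :
    (a ^ n * b ^ m) ^ (1 / ((m : ℝ) * n)) = a ^ (1 / (m : ℝ)) * b ^ (1 / (n : ℝ)) := by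
  rw [Real.mul_rpow (by positivity) (by positivity), ← Real.rpow_natCast, ← Real.rpow_natCast,
    ← Real.rpow_mul ha, ← Real.rpow_mul hb]
  congr 2 <;> field_simp

theorem stmt4 (G H : Type*) [Group G] [Fintype G] [Group H] [Fintype H]
    (h : Nat.Coprime (Fintype.card G) (Fintype.card H)) :
    lfun (G × H) = lfun G * lfun H := by
  simp only [lfun, prod_orderOf_prod_of_coprime_card h, Fintype.card_prod, Nat.cast_mul,
    Nat.cast_pow]
  rw [Real.pow_mul_pow_rpow_one_div_mul (Nat.cast_nonneg _) (Nat.cast_nonneg _)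
    Fintype.card_ne_zero Fintype.card_ne_zero, mul_div_mul_comm]
end

section
/- If G and H are finite groups with coprime orders, then ρ(G × H) = ρ(G)^{|H|} · ρ(H)^{|G|}, where ρ(G) is the product of the orders of all elements of G. -/
theorem Prod.orderOf_eq_mul_of_coprime {G H : Type*} [Group G] [Group H]
    (h : (Nat.card G).Coprime (Nat.card H)) (x : G × H) :
    orderOf x = orderOf x.1 * orderOf x.2 :=
  x.orderOf ▸ ((h.coprime_dvd_left (orderOf_dvd_natCard x.1)).coprime_dvd_right
    (orderOf_dvd_natCard x.2)).lcm_eq_mul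

theorem Fintype.prod_prod_type_mul {α β M : Type*} [Fintype α] [Fintype β] [CommMonoid M]
    (f : α → M) (g : β → M) :
    ∏ x : α × β, f x.1 * g x.2 = (∏ a, f a) ^ Fintype.card β * (∏ b, g b) ^ Fintype.card α := by
  rw [Fintype.prod_prod_type]
  simp only [Finset.prod_mul_distrib, Finset.prod_const, Finset.card_univ, Finset.prod_pow]

theorem stmt5 (G H : Type*) [Group G] [Fintype G] [Group H] [Fintype H]
    (h : Nat.Coprime (Fintype.card G) (Fintype.card H)) :
    (∏ x : G × H, orderOf x) =
      (∏ g : G, orderOf g) ^ (Fintype.card H) * (∏ h : H, orderOf h) ^ (Fintype.card G) := by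
  rw [← Nat.card_eq_fintype_card, ← Nat.card_eq_fintype_card] at h
  simp only [Prod.orderOf_eq_mul_of_coprime h]
  exact Fintype.prod_prod_type_mul _ _
end

section
/- Let p be a prime and P a nontrivial cyclic p-group of order p^n. Then ψ''(P) = (p^{2n+1} + 1)/(p^{2n+1} + p^{2n}), where ψ''(P) = (Σ_{g∈P} o(g))/|P|^2. -/
/-! A cyclic group of order `m` has exactly `φ d` elements of order `d` for each `d ∣ m`, so
`∑ g, o(g) = ∑_{d ∣ m} φ(d) d`. For `m = p^n` this sum telescopes: multiplied by `p + 1`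
it equals `p^(2n+1) + 1`, which gives the formula. -/

open Finset

theorem IsCyclic.sum_orderOf_eq_sum_divisors (G : Type*) [Group G] [Fintype G] [IsCyclic G] :
    ∑ g : G, orderOf g = ∑ d ∈ (Fintype.card G).divisors, d.totient * d := by
  classical
  rw [← sum_fiberwise_of_maps_to (g := orderOf) (t := (Fintype.card G).divisors)
    fun g _ => Nat.mem_divisors.mpr ⟨orderOf_dvd_card, Fintype.card_ne_zero⟩]
  refine sum_congr rfl fun d hd => ?_
  rw [sum_congr rfl fun g hg => (mem_filter.mp hg).2, sum_const, smul_eq_mul,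
    IsCyclic.card_orderOf_eq_totient (Nat.mem_divisors.mp hd).1]

theorem Nat.sum_divisors_prime_pow_totient_mul_mul_succ {p : ℕ} (hp : p.Prime) (n : ℕ) :
    (∑ d ∈ (p ^ n).divisors, d.totient * d) * (p + 1) = p ^ (2 * n + 1) + 1 := by
  rw [Nat.sum_divisors_prime_pow hp]
  induction n with
  | zero => simp
  | succ n ih =>
    obtain ⟨q, rfl⟩ : ∃ q, p = q + 1 := ⟨p - 1, (Nat.sub_add_cancel hp.one_le).symm⟩
    rw [sum_range_succ, add_mul, ih, Nat.totient_prime_pow_succ hp, Nat.add_sub_cancel]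
    ring

theorem stmt7_general (p n : ℕ) (hp : p.Prime)
    (P : Type*) [Group P] [Fintype P] [IsCyclic P] (hcard : Fintype.card P = p ^ n) :
    psi2 P = ((p : ℝ) ^ (2 * n + 1) + 1) / ((p : ℝ) ^ (2 * n + 1) + (p : ℝ) ^ (2 * n)) := by
  have hsum : ((∑ g : P, orderOf g : ℕ) : ℝ) * (p + 1) = (p : ℝ) ^ (2 * n + 1) + 1 := by
    rw [IsCyclic.sum_orderOf_eq_sum_divisors, hcard]
    exact_mod_cast Nat.sum_divisors_prime_pow_totient_mul_mul_succ hp n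
  have hp0 : (0 : ℝ) < p := by exact_mod_cast hp.pos
  rw [psi2, hcard, ← hsum]
  field_simp
  push_cast
  ring

theorem stmt7 (p n : ℕ) (hp : p.Prime) (hn : 1 ≤ n)
    (P : Type*) [Group P] [Fintype P] [IsCyclic P] (hcard : Fintype.card P = p ^ n) :
    psi2 P = ((p : ℝ) ^ (2 * n + 1) + 1) / ((p : ℝ) ^ (2 * n + 1) + (p : ℝ) ^ (2 * n)) :=
  stmt7_general p n hp P hcard
end

section
/- Let p be a prime and P a nontrivial cyclic p-group of order p^n. Then l(P) = p^{-(p^n - 1)/(p^n(p-1))}, where l(P) = ρ(P)^(1/|P|)/|P| and ρ(P) is the product of the orders of all elements of P. -/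
/-!
A cyclic group of order `m` has exactly `φ d` elements of order `d` for each `d ∣ m`, so
`ρ(P) = ∏_{k ≤ n} (p^k)^{φ(p^k)} = p^S` with `S = ∑_{k ≤ n} k φ(p^k)`. By induction on `n`,
`S (p - 1) = n p^n (p - 1) - (p^n - 1)`, and `l(P) = p^{S/p^n - n}` gives the claim.
-/

open Finset

theorem IsCyclic.prod_comp_orderOf {G M : Type*} [Group G] [Fintype G] [IsCyclic G]
    [CommMonoid M] (f : ℕ → M) :
    ∏ g : G, f (orderOf g) = ∏ d ∈ (Fintype.card G).divisors, f d ^ d.totient := by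
  classical
  have h_mem : ∀ g ∈ (univ : Finset G), orderOf g ∈ (Fintype.card G).divisors := fun _ _ =>
    Nat.mem_divisors.mpr ⟨orderOf_dvd_card, Fintype.card_ne_zero⟩
  rw [← prod_fiberwise_of_maps_to' h_mem]
  refine prod_congr rfl fun d hd => ?_
  rw [prod_const, IsCyclic.card_orderOf_eq_totient (Nat.dvd_of_mem_divisors hd)]

theorem Nat.sum_mul_totient_prime_pow_mul_sub_one_add {p : ℕ} (hp : p.Prime) (n : ℕ) :
    (∑ k ∈ range (n + 1), k * (p ^ k).totient) * (p - 1) + p ^ n = n * p ^ n * (p - 1) + 1 := by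
  induction n with
  | zero => simp
  | succ n ih =>
    rw [sum_range_succ, Nat.totient_prime_pow_succ hp]
    zify [hp.one_le] at ih ⊢
    linear_combination ih

theorem IsCyclic.prod_orderOf_of_card_eq_prime_pow {G : Type*} [Group G] [Fintype G] [IsCyclic G]
    {p n : ℕ} (hp : p.Prime) (hcard : Fintype.card G = p ^ n) :
    ∏ g : G, orderOf g = p ^ ∑ k ∈ range (n + 1), k * (p ^ k).totient := by
  rw [IsCyclic.prod_comp_orderOf (fun d => d), hcard, Nat.prod_divisors_prime_pow hp,
    ← prod_pow_eq_pow_sum]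
  exact prod_congr rfl fun k _ => by rw [← pow_mul, mul_comm]

theorem stmt8_general (p n : ℕ) (hp : p.Prime)
    (P : Type*) [Group P] [Fintype P] [IsCyclic P] (hcard : Fintype.card P = p ^ n) :
    lfun P = (p : ℝ) ^ (-(((p : ℝ) ^ n - 1) / ((p : ℝ) ^ n * ((p : ℝ) - 1)))) := by
  set S := ∑ k ∈ range (n + 1), k * (p ^ k).totient
  have hp₀ : (0 : ℝ) < p := by exact_mod_cast hp.pos
  have hp₁ : (p : ℝ) - 1 ≠ 0 := sub_ne_zero.mpr (by exact_mod_cast hp.one_lt.ne')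
  have hS : (S : ℝ) * (p - 1) + p ^ n = n * p ^ n * (p - 1) + 1 := by
    have h := congrArg (Nat.cast : ℕ → ℝ) (Nat.sum_mul_totient_prime_pow_mul_sub_one_add hp n)
    simpa only [Nat.cast_add, Nat.cast_mul, Nat.cast_pow, Nat.cast_sub hp.one_le, Nat.cast_one]
      using h
  rw [lfun, IsCyclic.prod_orderOf_of_card_eq_prime_pow hp hcard, hcard]
  push_cast
  rw [← Real.rpow_natCast (p : ℝ) S, ← Real.rpow_natCast (p : ℝ) n, ← Real.rpow_mul hp₀.le,
    ← Real.rpow_sub hp₀, Real.rpow_natCast]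
  congr 1
  field_simp
  linear_combination hS

theorem stmt8 (p n : ℕ) (hp : p.Prime) (hn : 1 ≤ n)
    (P : Type*) [Group P] [Fintype P] [IsCyclic P] (hcard : Fintype.card P = p ^ n) :
    lfun P = (p : ℝ) ^ (-(((p : ℝ) ^ n - 1) / ((p : ℝ) ^ n * ((p : ℝ) - 1)))) :=
  stmt8_general p n hp P hcard
end

section
/- Let p be a prime and P a nontrivial cyclic p-group. Then p^{-1/(p-1)} ≤ l(P) ≤ p^{-1/p}, where l(P) = ρ(P)^(1/|P|)/|P| and ρ(P) is the product of the orders of all elements of P. -/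
/-! A cyclic group of order `N` has `φ d` elements of order `d` for each `d ∣ N`, so
`ρ(P) = p ^ E` with `E = ∑_{k ≤ n} k φ(p^k)` when `|P| = p^n`. Telescoping gives
`E = n p^n - s` with `s = 1 + p + ⋯ + p^{n-1}`, hence `l(P) = p ^ (-s / p^n)`. The ratio
`s / p^n` is at least `1/p` (from the top term `p^{n-1}`) and at most `1/(p-1)`, since
`(p - 1) s = p^n - 1`. -/

open Finset

theorem IsCyclic.prod_orderOf_eq_prod_divisors_pow_totient (G : Type*) [Group G] [Fintype G]
    [IsCyclic G] :
    ∏ g : G, orderOf g = ∏ d ∈ (Fintype.card G).divisors, d ^ d.totient := by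
  have h_mem : ∀ g ∈ (univ : Finset G), orderOf g ∈ (Fintype.card G).divisors := fun g _ =>
    Nat.mem_divisors.mpr ⟨orderOf_dvd_card, Fintype.card_ne_zero⟩
  refine (prod_fiberwise_of_maps_to' h_mem id).symm.trans (prod_congr rfl fun d hd => ?_)
  rw [prod_const, id, IsCyclic.card_orderOf_eq_totient (Nat.mem_divisors.mp hd).1]

theorem Nat.prod_divisors_prime_pow_pow_totient {p : ℕ} (hp : p.Prime) (n : ℕ) :
    ∏ d ∈ (p ^ n).divisors, d ^ d.totient = p ^ ∑ k ∈ range (n + 1), k * (p ^ k).totient := by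
  rw [Nat.prod_divisors_prime_pow hp, ← prod_pow_eq_pow_sum]
  exact prod_congr rfl fun k _ => (pow_mul p k _).symm

theorem Nat.sum_mul_totient_prime_pow_add_geom_sum {p : ℕ} (hp : p.Prime) (n : ℕ) :
    ∑ k ∈ range (n + 1), k * (p ^ k).totient + ∑ k ∈ range n, p ^ k = n * p ^ n := by
  induction n with
  | zero => simp
  | succ n ih =>
    rw [sum_range_succ _ (n + 1), sum_range_succ (p ^ ·) n, Nat.totient_prime_pow_succ hp]
    have hp1 : 1 ≤ p := hp.one_lt.le
    zify [hp1] at ih ⊢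
    linear_combination ih

theorem lfun_eq_rpow_of_card_eq_prime_pow {p n : ℕ} (hp : p.Prime) (P : Type*) [Group P]
    [Fintype P] [IsCyclic P] (hcard : Fintype.card P = p ^ n) :
    lfun P = (p : ℝ) ^ (-(∑ k ∈ range n, (p : ℝ) ^ k) / (p : ℝ) ^ n) := by
  have hp0 : (0 : ℝ) < p := by exact_mod_cast hp.pos
  have h_sum := Nat.sum_mul_totient_prime_pow_add_geom_sum hp n
  rw [lfun, IsCyclic.prod_orderOf_eq_prod_divisors_pow_totient, hcard,
    Nat.prod_divisors_prime_pow_pow_totient hp]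
  set E := ∑ k ∈ range (n + 1), k * (p ^ k).totient
  have h_exp : (E : ℝ) = n * (p : ℝ) ^ n - ∑ k ∈ range n, (p : ℝ) ^ k := by
    rw [eq_sub_iff_add_eq]; exact_mod_cast h_sum
  push_cast
  rw [← Real.rpow_natCast (p : ℝ) E, ← Real.rpow_mul hp0.le, ← Real.rpow_natCast (p : ℝ) n,
    ← Real.rpow_sub hp0, h_exp]
  congr 1
  rw [Real.rpow_natCast]
  field_simp
  ring

theorem one_div_le_geom_sum_div_pow {q : ℝ} (hq : 0 < q) {n : ℕ} (hn : 1 ≤ n) :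
    1 / q ≤ (∑ k ∈ range n, q ^ k) / q ^ n := by
  obtain ⟨m, rfl⟩ := Nat.exists_eq_add_of_le' hn
  rw [div_le_div_iff₀ hq (by positivity), one_mul, pow_succ]
  exact mul_le_mul_of_nonneg_right
    (single_le_sum (fun k _ => by positivity) (self_mem_range_succ m)) hq.le

theorem geom_sum_div_pow_le {q : ℝ} (hq : 1 < q) (n : ℕ) :
    (∑ k ∈ range n, q ^ k) / q ^ n ≤ 1 / (q - 1) := by
  rw [div_le_div_iff₀ (by positivity) (by linarith), one_mul, geom_sum_mul]
  linarith

theorem stmt9 (p n : ℕ) (hp : p.Prime) (hn : 1 ≤ n)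
    (P : Type*) [Group P] [Fintype P] [IsCyclic P] (hcard : Fintype.card P = p ^ n) :
    (p : ℝ) ^ (-(1 / ((p : ℝ) - 1))) ≤ lfun P ∧ lfun P ≤ (p : ℝ) ^ (-(1 / (p : ℝ))) := by
  have hp1 : (1 : ℝ) ≤ p := by exact_mod_cast hp.one_lt.le
  rw [lfun_eq_rpow_of_card_eq_prime_pow hp P hcard, neg_div]
  constructor
  · exact Real.rpow_le_rpow_of_exponent_le hp1 <| neg_le_neg <|
      geom_sum_div_pow_le (by exact_mod_cast hp.one_lt) n
  · exact Real.rpow_le_rpow_of_exponent_le hp1 <| neg_le_neg <|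
      one_div_le_geom_sum_div_pow (by linarith) hn
end

section
/- Let G be a finite cyclic group of odd order, let p ≥ 3 be the smallest prime dividing |G|, and suppose the number of distinct prime divisors of |G| is at most (p+1)/2. Then l(G) > 2^{-1/2} · p^{-(p+1)/(2p)}, where l(G) = ρ(G)^(1/|G|)/|G| and ρ(G) is the product of the orders of all elements of G. -/
/-!
For a cyclic group of order `n` there are `φ d` elements of order `d` for every `d ∣ n`, so
`log ρ(G) = ∑_{d ∣ n} φ d · log d`. Since `log = Λ * ζ` and `φ * ζ = id`, this becomes
`log l(G) = -∑_{a ∣ n} Λ a / a`, and summing the geometric series over the prime powers dividing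
`n` gives `∑_{a ∣ n} Λ a / a ≤ ∑_{q ∣ n} log q / (q - 1)`. As `t ↦ log t / (t - 1)` decreases,
the prime `p` contributes `log p / (p - 1)` and each of the at most `(p - 1) / 2` other prime
divisors at most `log (p + 1) / p`; an elementary estimate puts this below
`log 2 / 2 + (p + 1) / (2p) · log p`, which is minus the logarithm of the bound.
-/

open Finset ArithmeticFunction
open scoped ArithmeticFunction.zeta

namespace ArithmeticFunction

noncomputable def totientReal : ArithmeticFunction ℝ := ⟨fun n => n.totient, by simp⟩

theorem totientReal_apply (n : ℕ) : totientReal n = n.totient := rfl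

theorem totientReal_mul_zeta :
    totientReal * ζ = ((ArithmeticFunction.id : ArithmeticFunction ℕ) : ArithmeticFunction ℝ) := by
  ext n
  simp only [coe_mul_zeta_apply, totientReal_apply, natCoe_apply, id_apply]
  exact_mod_cast Nat.sum_totient n

theorem totientReal_mul_log :
    totientReal * log
      = Λ * ((ArithmeticFunction.id : ArithmeticFunction ℕ) : ArithmeticFunction ℝ) := by
  rw [← vonMangoldt_mul_zeta, mul_left_comm, totientReal_mul_zeta]

theorem sum_divisorsAntidiagonal_totient_mul_log (n : ℕ) :
    ∑ x ∈ n.divisorsAntidiagonal, (x.1.totient : ℝ) * Real.log x.2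
      = ∑ x ∈ n.divisorsAntidiagonal, Λ x.1 * x.2 := by
  simpa [mul_apply, totientReal_apply] using congrArg (· n) totientReal_mul_log

end ArithmeticFunction

theorem sum_divisors_totient_mul_log (n : ℕ) :
    ∑ d ∈ n.divisors, (d.totient : ℝ) * Real.log d
      = n * (Real.log n - ∑ a ∈ n.divisors, Λ a / a) := by
  calc ∑ d ∈ n.divisors, (d.totient : ℝ) * Real.log d
      = ∑ x ∈ n.divisorsAntidiagonal,
          ((x.1.totient : ℝ) * Real.log n - x.1.totient * Real.log x.2) := by
        rw [← Nat.sum_divisorsAntidiagonal (fun d _ => (d.totient : ℝ) * Real.log d)]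
        refine sum_congr rfl fun x hx => ?_
        obtain ⟨hmul, -⟩ := Nat.mem_divisorsAntidiagonal.1 hx
        rw [← hmul, Nat.cast_mul,
          Real.log_mul (mod_cast Nat.left_ne_zero_of_mem_divisorsAntidiagonal hx)
            (mod_cast Nat.right_ne_zero_of_mem_divisorsAntidiagonal hx)]
        ring
    _ = ∑ x ∈ n.divisorsAntidiagonal, ((x.1.totient : ℝ) * Real.log n - n * (Λ x.1 / x.1)) := by
        rw [sum_sub_distrib, sum_sub_distrib, sum_divisorsAntidiagonal_totient_mul_log]
        congr 1
        refine sum_congr rfl fun x hx => ?_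
        obtain ⟨hmul, -⟩ := Nat.mem_divisorsAntidiagonal.1 hx
        have : (x.1 : ℝ) ≠ 0 := mod_cast Nat.left_ne_zero_of_mem_divisorsAntidiagonal hx
        rw [← hmul, Nat.cast_mul]
        field_simp
    _ = n * (Real.log n - ∑ a ∈ n.divisors, Λ a / a) := by
        rw [sum_sub_distrib, ← sum_mul, ← mul_sum,
          Nat.sum_divisorsAntidiagonal (fun a _ => (a.totient : ℝ)),
          Nat.sum_divisorsAntidiagonal (fun a _ => Λ a / a)]
        rw [← Nat.cast_sum, Nat.sum_totient]
        ring

theorem sum_divisors_vonMangoldt_mul (n : ℕ) (f : ℕ → ℝ) :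
    ∑ a ∈ n.divisors, Λ a * f a
      = ∑ q ∈ n.primeFactors, ∑ k ∈ Icc 1 (n.factorization q), Real.log q * f (q ^ k) := by
  rw [sum_sigma']
  symm
  refine sum_bij_ne_zero (fun x _ _ => x.1 ^ x.2) ?_ ?_ ?_ ?_
  · rintro ⟨q, k⟩ hx -
    simp only [mem_sigma, Nat.mem_primeFactors, mem_Icc] at hx
    obtain ⟨⟨hq, -, hn⟩, -, hk⟩ := hx
    exact Nat.mem_divisors.2 ⟨(hq.pow_dvd_iff_le_factorization hn).2 hk, hn⟩
  · rintro ⟨q, k⟩ hx - ⟨q', k'⟩ hx' - (h : q ^ k = q' ^ k')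
    simp only [mem_sigma, Nat.mem_primeFactors, mem_Icc] at hx hx'
    obtain ⟨rfl, rfl⟩ := Nat.Prime.pow_inj' hx.1.1 hx'.1.1 (by omega) (by omega) h
    rfl
  · intro a ha hfa
    obtain ⟨q, k, hq, hk, rfl⟩ :=
      (isPrimePow_nat_iff _).1 (vonMangoldt_ne_zero_iff.1 (left_ne_zero_of_mul hfa))
    obtain ⟨hdvd, hn⟩ := Nat.mem_divisors.1 ha
    refine ⟨⟨q, k⟩, ?_, ?_, rfl⟩
    · simp only [mem_sigma, Nat.mem_primeFactors, mem_Icc]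
      exact ⟨⟨hq, (dvd_pow_self q hk.ne').trans hdvd, hn⟩, hk,
        (hq.pow_dvd_iff_le_factorization hn).1 hdvd⟩
    · rwa [vonMangoldt_apply_pow hk.ne', vonMangoldt_apply_prime hq] at hfa
  · rintro ⟨q, k⟩ hx -
    simp only [mem_sigma, Nat.mem_primeFactors, mem_Icc] at hx
    rw [vonMangoldt_apply_pow (n := q) (k := k) (by omega), vonMangoldt_apply_prime hx.1.1]

theorem sum_divisors_vonMangoldt_div_le (n : ℕ) :
    ∑ a ∈ n.divisors, Λ a / a ≤ ∑ q ∈ n.primeFactors, Real.log q / (q - 1) := by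
  simp_rw [div_eq_mul_inv (Λ _), sum_divisors_vonMangoldt_mul]
  gcongr with q hq
  have hq1 : (1 : ℝ) < q := by exact_mod_cast (Nat.prime_of_mem_primeFactors hq).one_lt
  rw [← mul_sum, div_eq_mul_inv (Real.log q)]
  gcongr
  calc ∑ k ∈ Icc 1 (n.factorization q), ((q ^ k : ℕ) : ℝ)⁻¹
        = ∑ k ∈ Ico 1 (n.factorization q + 1), (q : ℝ)⁻¹ ^ k := by
          push_cast [inv_pow]; rfl
      _ ≤ (q : ℝ)⁻¹ ^ 1 / (1 - (q : ℝ)⁻¹) :=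
          geom_sum_Ico_le_of_lt_one (by positivity) (inv_lt_one_of_one_lt₀ hq1)
      _ = ((q : ℝ) - 1)⁻¹ := by field_simp

theorem IsCyclic.sum_comp_orderOf {G M : Type*} [Group G] [Fintype G] [IsCyclic G]
    [AddCommMonoid M] (f : ℕ → M) :
    ∑ g : G, f (orderOf g) = ∑ d ∈ (Fintype.card G).divisors, d.totient • f d := by
  classical
  rw [← sum_fiberwise_of_maps_to (g := orderOf) (t := (Fintype.card G).divisors)
    fun g _ => Nat.mem_divisors.2 ⟨orderOf_dvd_card, Fintype.card_ne_zero⟩]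
  refine sum_congr rfl fun d hd => ?_
  rw [sum_congr rfl fun g hg => congrArg f (mem_filter.1 hg).2, sum_const,
    IsCyclic.card_orderOf_eq_totient (Nat.mem_divisors.1 hd).1]

theorem IsCyclic.lfun_eq_exp (G : Type*) [Group G] [Fintype G] [IsCyclic G] :
    lfun G = Real.exp (-∑ a ∈ (Fintype.card G).divisors, Λ a / a) := by
  have hn : (Fintype.card G : ℝ) ≠ 0 := by exact_mod_cast Fintype.card_ne_zero
  have hρ : 0 < ((∏ g : G, orderOf g : ℕ) : ℝ) := by
    exact_mod_cast prod_pos fun g _ => orderOf_pos g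
  have hlog : Real.log ((∏ g : G, orderOf g : ℕ) : ℝ) = ∑ g : G, Real.log (orderOf g) := by
    push_cast
    exact Real.log_prod fun g _ => by exact_mod_cast (orderOf_pos g).ne'
  rw [← Real.exp_log (show 0 < lfun G by unfold lfun; positivity), lfun,
    Real.log_div (by positivity) hn, Real.log_rpow hρ, hlog,
    IsCyclic.sum_comp_orderOf (fun d => Real.log d)]
  simp only [nsmul_eq_mul]
  rw [sum_divisors_totient_mul_log]
  field_simp
  congr 1
  ring

theorem Real.antitoneOn_log_div_sub_one :
    AntitoneOn (fun x => Real.log x / (x - 1)) (Set.Ioi 1) := by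
  intro x (hx : 1 < x) y (hy : 1 < y) hxy
  have hx0 : 0 < x := by linarith
  have hlog_y : Real.log y - Real.log x ≤ (y - x) / x := by
    have := Real.log_le_sub_one_of_pos (show 0 < y / x by positivity)
    rw [Real.log_div (by positivity) hx0.ne'] at this
    rwa [sub_div, div_self hx0.ne']
  have hlog_x : (x - 1) / x ≤ Real.log x := by
    have := Real.one_sub_inv_le_log_of_pos hx0
    rwa [sub_div, div_self hx0.ne', one_div]
  rw [div_le_div_iff₀ (by linarith) (by linarith)]
  have key : (x - 1) * (Real.log y - Real.log x) ≤ (y - x) * Real.log x :=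
    calc (x - 1) * (Real.log y - Real.log x) ≤ (x - 1) * ((y - x) / x) := by gcongr
      _ = (y - x) * ((x - 1) / x) := by ring
      _ ≤ (y - x) * Real.log x := by gcongr
  linarith

theorem Real.log_div_sub_one_add_lt {x : ℝ} (hx : 3 ≤ x) :
    Real.log x / (x - 1) + (x - 1) / 2 * (Real.log (x + 1) / (x + 1 - 1))
      < Real.log 2 / 2 + (x + 1) / (2 * x) * Real.log x := by
  have hx0 : 0 < x := by linarith
  have hx1 : 0 < x - 1 := by linarith
  have hsucc : x * Real.log (x + 1) ≤ x * Real.log x + 1 := by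
    have := Real.log_le_sub_one_of_pos (show 0 < (x + 1) / x by positivity)
    rw [Real.log_div (by positivity) hx0.ne', add_div, div_self hx0.ne', add_sub_cancel_left,
      le_div_iff₀ hx0] at this
    linarith
  have hlog : Real.log x ≤ Real.log 2 * (x - 1) := by
    have h3 : Real.log x / (x - 1) ≤ Real.log 3 / (3 - 1) :=
      Real.antitoneOn_log_div_sub_one (by norm_num : (1:ℝ) < 3) (by linarith : (1:ℝ) < x) hx
    have h34 : Real.log 3 ≤ 2 * Real.log 2 := by
      rw [← Real.log_rpow (by norm_num)]; exact Real.log_le_log (by norm_num) (by norm_num)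
    rw [div_le_iff₀ hx1] at h3
    nlinarith
  have hquad : 0 < Real.log 2 * (x * (x - 2)) - (x - 1) := by
    nlinarith [Real.log_two_gt_d9, mul_nonneg (sub_nonneg.2 hx) (by linarith : (0:ℝ) ≤ x + 1)]
  rw [add_sub_cancel_right, ← sub_pos]
  have : Real.log 2 / 2 + (x + 1) / (2 * x) * Real.log x
      - (Real.log x / (x - 1) + (x - 1) / 2 * (Real.log (x + 1) / x))
      = (Real.log 2 * x ^ 2 * (x - 1) + x * (x ^ 2 - 2 * x - 1) * Real.log x
          - (x - 1) ^ 2 * (x * Real.log (x + 1))) / (2 * x ^ 2 * (x - 1)) := by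
    field_simp; ring
  rw [this]
  apply div_pos _ (by positivity)
  nlinarith [mul_le_mul_of_nonneg_left hsucc (sq_nonneg (x - 1)),
    mul_le_mul_of_nonneg_left hlog (by linarith : (0:ℝ) ≤ 2 * x), mul_pos hx1 hquad]

theorem sum_log_div_sub_one_lt {s : Finset ℕ} {p : ℕ} (hp3 : 3 ≤ p) (hp : p ∈ s)
    (hs : ∀ q ∈ s, p ≤ q) (hcard : 2 * #s ≤ p + 1) :
    ∑ q ∈ s, Real.log q / ((q : ℝ) - 1) < Real.log 2 / 2 + (p + 1) / (2 * p) * Real.log p := by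
  have hp3' : (3 : ℝ) ≤ p := by exact_mod_cast hp3
  have hrest : ∑ q ∈ s.erase p, Real.log q / ((q : ℝ) - 1)
      ≤ #(s.erase p) * (Real.log (p + 1) / ((p : ℝ) + 1 - 1)) := by
    rw [← nsmul_eq_mul, ← sum_const]
    refine sum_le_sum fun q hq => ?_
    have hpq : (p : ℝ) + 1 ≤ q := by
      have := hs q (mem_of_mem_erase hq)
      have := ne_of_mem_erase hq
      exact_mod_cast (show p + 1 ≤ q by omega)
    exact Real.antitoneOn_log_div_sub_one (Set.mem_Ioi.2 (by linarith))
      (Set.mem_Ioi.2 (by linarith)) hpq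
  have hcard' : (#(s.erase p) : ℝ) ≤ (p - 1) / 2 := by
    rw [card_erase_of_mem hp, le_div_iff₀ two_pos, Nat.cast_sub (card_pos.2 ⟨p, hp⟩)]
    have : (2 * #s : ℝ) ≤ p + 1 := by exact_mod_cast hcard
    push_cast; linarith
  rw [← add_sum_erase s _ hp]
  calc _ ≤ Real.log p / ((p : ℝ) - 1) + (p - 1) / 2 * (Real.log (p + 1) / ((p : ℝ) + 1 - 1)) := by
        gcongr
        refine hrest.trans (mul_le_mul_of_nonneg_right hcard' ?_)
        exact div_nonneg (Real.log_nonneg (by linarith)) (by linarith)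
    _ < _ := Real.log_div_sub_one_add_lt hp3'

theorem stmt12_general (G : Type*) [Group G] [Fintype G] [IsCyclic G] (p : ℕ) (hp : p.Prime)
    (h3 : 3 ≤ p) (hpd : p ∣ Fintype.card G)
    (hmin : ∀ q : ℕ, q.Prime → q ∣ Fintype.card G → p ≤ q)
    (hfew : 2 * (Fintype.card G).primeFactors.card ≤ p + 1) :
    lfun G > (2 : ℝ) ^ (-(1 / 2 : ℝ)) * (p : ℝ) ^ (-(((p : ℝ) + 1) / (2 * (p : ℝ)))) := by
  have hpP : p ∈ (Fintype.card G).primeFactors :=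
    Nat.mem_primeFactors.2 ⟨hp, hpd, Fintype.card_ne_zero⟩
  have hP : ∀ q ∈ (Fintype.card G).primeFactors, p ≤ q := fun q hq =>
    hmin q (Nat.prime_of_mem_primeFactors hq) (Nat.dvd_of_mem_primeFactors hq)
  have hbound := (sum_divisors_vonMangoldt_div_le _).trans_lt
    (sum_log_div_sub_one_lt h3 hpP hP hfew)
  rw [gt_iff_lt, IsCyclic.lfun_eq_exp, Real.rpow_def_of_pos two_pos,
    Real.rpow_def_of_pos (mod_cast hp.pos), ← Real.exp_add, Real.exp_lt_exp]
  linarith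

theorem stmt12 (G : Type*) [Group G] [Fintype G] [IsCyclic G] (p : ℕ) (hp : p.Prime)
    (h3 : 3 ≤ p) (hodd : Odd (Fintype.card G)) (hpd : p ∣ Fintype.card G)
    (hmin : ∀ q : ℕ, q.Prime → q ∣ Fintype.card G → p ≤ q)
    (hfew : 2 * (Fintype.card G).primeFactors.card ≤ p + 1) :
    lfun G > (2 : ℝ) ^ (-(1 / 2 : ℝ)) * (p : ℝ) ^ (-(((p : ℝ) + 1) / (2 * (p : ℝ)))) :=
  stmt12_general G p hp h3 hpd hmin hfew
end

section
/- Let G be a finite group and p a prime. If l(G) > p^{-1}, then G has a unique Sylow p-subgroup (which is therefore normal), and this Sylow p-subgroup is cyclic. Here l(G) = ρ(G)^(1/|G|)/|G| and ρ(G) is the product of the orders of all elements of G. -/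
open Subgroup

theorem Real.prod_rpow_one_div_card_le {ι : Type*} [Fintype ι] [Nonempty ι] {f : ι → ℝ} {c : ℝ}
    (hf₀ : ∀ i, 0 ≤ f i) (hfc : ∀ i, f i ≤ c) :
    (∏ i, f i) ^ ((1 : ℝ) / Fintype.card ι) ≤ c := by
  have hc : 0 ≤ c := (hf₀ (Classical.arbitrary ι)).trans (hfc _)
  have hn : (Fintype.card ι : ℝ) ≠ 0 := by positivity
  calc (∏ i, f i) ^ ((1 : ℝ) / Fintype.card ι)
      ≤ (c ^ Fintype.card ι) ^ ((1 : ℝ) / Fintype.card ι) := by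
        gcongr
        · exact Finset.prod_nonneg fun i _ ↦ hf₀ i
        · exact (Finset.prod_le_prod (fun i _ ↦ hf₀ i) fun i _ ↦ hfc i).trans_eq (by simp)
    _ = c := by
        rw [← Real.rpow_natCast, ← Real.rpow_mul hc, mul_one_div_cancel hn, Real.rpow_one]

theorem lfun_le_of_forall_orderOf_le (G : Type*) [Group G] [Fintype G] {c : ℝ}
    (hc : ∀ g : G, (orderOf g : ℝ) ≤ c * Fintype.card G) : lfun G ≤ c := by
  have hn : (0 : ℝ) < Fintype.card G := by exact_mod_cast Fintype.card_pos
  rw [lfun, div_le_iff₀ hn, Nat.cast_prod]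
  exact Real.prod_rpow_one_div_card_le (fun g ↦ Nat.cast_nonneg _) hc

theorem exists_index_zpowers_lt_of_inv_lt_lfun (G : Type*) [Group G] [Fintype G] {p : ℕ}
    (hp : 0 < p) (h : (p : ℝ)⁻¹ < lfun G) : ∃ g : G, (zpowers g).index < p := by
  by_contra! hindex
  refine h.not_ge (lfun_le_of_forall_orderOf_le G fun g ↦ ?_)
  have hcard : orderOf g * (zpowers g).index = Fintype.card G := by
    rw [← Nat.card_zpowers, card_mul_index, Nat.card_eq_fintype_card]
  rw [← hcard, Nat.cast_mul, inv_mul_eq_div, le_div_iff₀ (by positivity)]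
  gcongr
  exact hindex g

namespace Sylow

variable {G : Type*} [Group G] [Finite G] {p : ℕ} [Fact p.Prime]

theorem exists_le_of_not_dvd_index {H : Subgroup G} (hH : ¬ p ∣ H.index) :
    ∃ P : Sylow p G, (P : Subgroup G) ≤ H := by
  let Q : Sylow p H := Sylow.nonempty.some
  have hQ : ¬ p ∣ (Q.map H.subtype).index := by
    rw [index_map_subtype]
    exact Nat.Prime.not_dvd_mul Fact.out Q.not_dvd_index hH
  exact ⟨(Q.2.map H.subtype).toSylow hQ, map_subtype_le _⟩

theorem exists_le_of_index_lt {H : Subgroup G} (hH : H.index < p) :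
    ∃ P : Sylow p G, (P : Subgroup G) ≤ H :=
  exists_le_of_not_dvd_index (Nat.not_dvd_of_pos_of_lt H.index_ne_zero_of_finite.bot_lt hH)

theorem card_eq_one_of_index_lt {H : Subgroup G} [IsMulCommutative H] (hH : H.index < p) :
    Nat.card (Sylow p G) = 1 := by
  obtain ⟨P, hPH⟩ := exists_le_of_index_lt hH
  have hH_le : H ≤ normalizer (P : Set G) :=
    (le_centralizer H).trans ((centralizer_le hPH).trans (centralizer_le_normalizer _))
  have hdvd : Nat.card (Sylow p G) ∣ H.index :=
    P.card_eq_index_normalizer ▸ index_dvd_of_le hH_le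
  have hlt : Nat.card (Sylow p G) < p :=
    (Nat.le_of_dvd H.index_ne_zero_of_finite.bot_lt hdvd).trans_lt hH
  have hmod := card_sylow_modEq_one p G
  rwa [Nat.ModEq, Nat.mod_eq_of_lt hlt, Nat.mod_eq_of_lt (Fact.out : p.Prime).one_lt] at hmod

end Sylow

theorem stmt13 (G : Type*) [Group G] [Fintype G] (p : ℕ) [Fact p.Prime]
    (h : lfun G > (p : ℝ)⁻¹) :
    (∀ P Q : Sylow p G, P = Q) ∧
      ∀ P : Sylow p G, (P : Subgroup G).Normal ∧ IsCyclic ↥(P : Subgroup G) := by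
  obtain ⟨g, hg⟩ := exists_index_zpowers_lt_of_inv_lt_lfun G (Fact.out : p.Prime).pos h
  have : Subsingleton (Sylow p G) :=
    (Nat.card_eq_one_iff_unique.mp (Sylow.card_eq_one_of_index_lt hg)).1
  obtain ⟨R, hR⟩ := Sylow.exists_le_of_index_lt hg
  refine ⟨Subsingleton.elim, fun P ↦ ⟨P.normal_of_subsingleton, ?_⟩⟩
  rw [Subsingleton.elim P R]
  exact isCyclic_of_le hR
end

section
/- Let G be a finite group and p a prime. If ψ''(G) > p^{-1}, then G has a unique Sylow p-subgroup, and this Sylow p-subgroup is cyclic. Here ψ''(G) = (Σ_{g∈G} o(g))/|G|^2. -/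
theorem exists_card_lt_mul_orderOf_of_inv_lt_psi2 {G : Type*} [Group G] [Fintype G] {p : ℕ}
    (hp : 0 < p) (h : (p : ℝ)⁻¹ < psi2 G) : ∃ g : G, Fintype.card G < p * orderOf g := by
  by_contra! hle
  have hsum : (∑ g : G, orderOf g) * p ≤ Fintype.card G ^ 2 :=
    calc (∑ g : G, orderOf g) * p = ∑ g : G, p * orderOf g := by
          rw [Finset.sum_mul]; simp only [mul_comm]
      _ ≤ ∑ _g : G, Fintype.card G := Finset.sum_le_sum fun g _ => hle g
      _ = Fintype.card G ^ 2 := by simp [sq]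
  have hsum' : ((∑ g : G, orderOf g : ℕ) : ℝ) * p ≤ (Fintype.card G : ℝ) ^ 2 := by
    exact_mod_cast hsum
  refine h.not_ge ?_
  rw [psi2, inv_eq_one_div, div_le_div_iff₀ (by positivity) (by exact_mod_cast hp)]
  linarith

theorem IsPGroup.le_of_index_lt {G : Type*} [Group G] {p : ℕ} [Fact p.Prime] {P H : Subgroup G}
    (hP : IsPGroup p P) [H.FiniteIndex] (hH : H.index < p) : P ≤ H := by
  obtain ⟨n, hn⟩ := hP.index (H.subgroupOf P)
  have hlt : p ^ n < p ^ 1 :=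
    calc p ^ n = H.relIndex P := hn.symm
      _ ≤ H.relIndex ⊤ :=
          H.relIndex_le_of_le_right le_top (by simpa using Subgroup.FiniteIndex.index_ne_zero)
      _ = H.index := H.relIndex_top_right
      _ < p ^ 1 := by rwa [pow_one]
  rw [pow_lt_pow_iff_right₀ (Fact.out : p.Prime).one_lt, Nat.lt_one_iff] at hlt
  rw [← Subgroup.relIndex_eq_one, Subgroup.relIndex, hn, hlt, pow_zero]

theorem Sylow.subsingleton_of_isMulCommutative_of_index_lt {G : Type*} [Group G] [Finite G]
    {p : ℕ} [Fact p.Prime] {C : Subgroup G} [IsMulCommutative C] (hC : C.index < p) :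
    Subsingleton (Sylow p G) := by
  have : Subsingleton (Sylow p C) := by
    obtain ⟨P⟩ := (inferInstance : Nonempty (Sylow p C))
    have := P.unique_of_normal (Subgroup.normal_of_isMulCommutative _)
    infer_instance
  exact ⟨fun P Q => Sylow.subtype_injective (hP := P.isPGroup'.le_of_index_lt hC)
    (hQ := Q.isPGroup'.le_of_index_lt hC) (Subsingleton.elim _ _)⟩

theorem Subgroup.index_zpowers_lt {G : Type*} [Group G] [Finite G] {p : ℕ} {g : G}
    (hg : Nat.card G < p * orderOf g) : (Subgroup.zpowers g).index < p := by
  rw [← (Subgroup.zpowers g).index_mul_card, Nat.card_zpowers] at hg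
  exact Nat.lt_of_mul_lt_mul_right hg

theorem stmt14 (G : Type*) [Group G] [Fintype G] (p : ℕ) [Fact p.Prime]
    (h : psi2 G > (p : ℝ)⁻¹) :
    (∀ P Q : Sylow p G, P = Q) ∧
      ∀ P : Sylow p G, (P : Subgroup G).Normal ∧ IsCyclic ↥(P : Subgroup G) := by
  obtain ⟨g, hg⟩ := exists_card_lt_mul_orderOf_of_inv_lt_psi2 (Fact.out : p.Prime).pos h
  have hindex : (Subgroup.zpowers g).index < p :=
    Subgroup.index_zpowers_lt (by rwa [Nat.card_eq_fintype_card])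
  have := Sylow.subsingleton_of_isMulCommutative_of_index_lt hindex
  exact ⟨Subsingleton.elim, fun P =>
    ⟨P.normal_of_subsingleton, Subgroup.isCyclic_of_le (P.isPGroup'.le_of_index_lt hindex)⟩⟩
end

section
/- Let p be an odd prime and G a finite group such that G = PH, where P is a normal Sylow p-subgroup of G with P ≅ C_p, C_G(P) = P, |H| > 1 and P ∩ H = 1. Then l(G) = p^{(-1+p-p|H|)/(p|H|)} · l(H), where l(G) = ρ(G)^(1/|G|)/|G| and ρ(G) is the product of the orders of all elements of G. -/
/-!
A nontrivial element of `P ≅ C_p` generates `P`, so its centralizer is `C_G(P) = P`. For `g ∉ P`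
let `n` be the order of `gP` in `G ⧸ P ≅ H`: then `g ^ n ∈ P` commutes with `g ∉ P`, hence
`g ^ n = 1`, and `g` has the same order as `gP`. As every coset of `P` has `p` elements,
`ρ(G) = ρ(P) · ρ(G ⧸ P) ^ p = p ^ (p - 1) · ρ(H) ^ p`, and with `|G| = p |H|` the formula for
`l(G)` is arithmetic.
-/

open Finset Subgroup

section

variable {G : Type*} [Group G]

theorem Subgroup.isComplement'_of_isCompl {H K : Subgroup G} [K.Normal] (h : IsCompl H K) :
    H.IsComplement' K :=
  isComplement'_of_disjoint_and_mul_eq_univ h.disjoint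
    (by rw [← mul_normal, h.sup_eq_top, coe_top])

theorem prod_orderOf_of_card_eq_prime {p : ℕ} (hp : p.Prime) [Fintype G] (hG : Nat.card G = p) :
    ∏ g : G, orderOf g = p ^ (p - 1) := by
  classical
  have := Fact.mk hp
  have horder : ∀ g ∈ univ.erase (1 : G), orderOf g = p := fun g hg =>
    orderOf_eq_prime (hG ▸ pow_card_eq_one') (ne_of_mem_erase hg)
  rw [← mul_prod_erase univ _ (mem_univ 1), orderOf_one, one_mul, prod_congr rfl horder,
    prod_const, card_erase_of_mem (mem_univ 1), card_univ, ← Nat.card_eq_fintype_card, hG]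

theorem Subgroup.centralizer_singleton_le_of_card_prime {N : Subgroup G}
    (hN : (Nat.card N).Prime) (hcent : centralizer (N : Set G) ≤ N) {x : G} (hx : x ∈ N)
    (hx1 : x ≠ 1) : centralizer {x} ≤ N := by
  have : Finite N := Nat.finite_of_card_ne_zero hN.ne_zero
  have hle : zpowers x ≤ N := zpowers_le.mpr hx
  have hcard : orderOf x = Nat.card N := by
    refine (hN.eq_one_or_self_of_dvd _ ?_).resolve_left (orderOf_eq_one_iff.not.mpr hx1)
    simpa only [← Nat.card_zpowers] using card_dvd_of_le hle
  have hgen : zpowers x = N := eq_of_le_of_card_ge hle (by rw [Nat.card_zpowers, hcard])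
  rwa [← centralizer_closure, ← zpowers_eq_closure, hgen]

theorem orderOf_eq_orderOf_mk_of_not_mem {N : Subgroup G} [N.Normal]
    (hN : ∀ x ∈ N, x ≠ 1 → centralizer {x} ≤ N) {g : G} (hg : g ∉ N) :
    orderOf g = orderOf (g : G ⧸ N) := by
  refine Nat.dvd_antisymm ?_ (orderOf_map_dvd (QuotientGroup.mk' N) g)
  set n := orderOf (g : G ⧸ N)
  have hmem : g ^ n ∈ N := by
    rw [← QuotientGroup.eq_one_iff, QuotientGroup.mk_pow, pow_orderOf_eq_one]
  by_contra hndvd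
  refine hg (hN _ hmem (fun h => hndvd (orderOf_dvd_of_pow_eq_one h)) ?_)
  rw [mem_centralizer_singleton_iff]
  exact (Commute.self_pow g n).eq

theorem QuotientGroup.prod_comp_mk_s15 {M : Type*} [CommMonoid M] [Fintype G] (N : Subgroup G)
    [Fintype (G ⧸ N)] (f : G ⧸ N → M) :
    ∏ g : G, f g = ∏ c : G ⧸ N, f c ^ Nat.card N := by
  classical
  rw [← Fintype.prod_fiberwise' QuotientGroup.mk f]
  refine prod_congr rfl fun c _ => ?_
  rw [prod_const, card_univ, Fintype.card_eq_nat_card]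
  congr 1
  exact (QuotientGroup.card_preimage_mk N {c}).trans (by simp)

theorem prod_orderOf_eq_prod_mul_prod_quotient_pow [Fintype G] (N : Subgroup G) [N.Normal]
    [Fintype N] [Fintype (G ⧸ N)] (hN : ∀ x ∈ N, x ≠ 1 → centralizer {x} ≤ N) :
    ∏ g : G, orderOf g = (∏ x : N, orderOf x) * (∏ c : G ⧸ N, orderOf c) ^ Nat.card N := by
  classical
  have hsplit : ∀ g : G, orderOf g = (if g ∈ N then orderOf g else 1) * orderOf (g : G ⧸ N) := by
    intro g
    by_cases hg : g ∈ N
    · rw [if_pos hg, (QuotientGroup.eq_one_iff g).mpr hg, orderOf_one, mul_one]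
    · rw [if_neg hg, one_mul, orderOf_eq_orderOf_mk_of_not_mem hN hg]
  rw [prod_congr rfl fun g _ => hsplit g, prod_mul_distrib, ← prod_filter,
    prod_subtype (F := ‹Fintype N›) _ (by simp), QuotientGroup.prod_comp_mk_s15 N orderOf, prod_pow]
  simp only [orderOf_coe]

end

theorem lfun_eq_of_prod_orderOf_eq {G H : Type*} [Group G] [Fintype G] [Group H] [Fintype H]
    {p : ℕ} (hp : 1 ≤ p) (hcard : Fintype.card G = p * Fintype.card H)
    (hprod : ∏ g : G, orderOf g = p ^ (p - 1) * (∏ h : H, orderOf h) ^ p) :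
    lfun G = (p : ℝ) ^ ((-1 + (p : ℝ) - (p : ℝ) * (Fintype.card H : ℝ)) /
      ((p : ℝ) * (Fintype.card H : ℝ))) * lfun H := by
  have hR : 0 < ∏ h : H, orderOf h := prod_pos fun h _ => orderOf_pos h
  unfold lfun
  rw [hprod, hcard]
  generalize ∏ h : H, orderOf h = R at hR ⊢
  generalize hq : Fintype.card H = q
  have hp0 : (0 : ℝ) < p := by exact_mod_cast hp
  have hq0 : (0 : ℝ) < q := by exact_mod_cast hq ▸ Fintype.card_pos
  have hR0 : (0 : ℝ) < R := by exact_mod_cast hR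
  have hroot : ((p ^ (p - 1) * R ^ p : ℕ) : ℝ) ^ ((1 : ℝ) / ((p * q : ℕ) : ℝ))
      = (p : ℝ) ^ (((p : ℝ) - 1) / (p * q)) * (R : ℝ) ^ ((1 : ℝ) / q) := by
    rw [Nat.cast_mul, Nat.cast_pow, Nat.cast_pow, ← Real.rpow_natCast, ← Real.rpow_natCast (R : ℝ),
      Nat.cast_sub hp, Nat.cast_one, Real.mul_rpow (by positivity) (by positivity),
      ← Real.rpow_mul hp0.le, ← Real.rpow_mul hR0.le]
    congr 2 <;> push_cast <;> field_simp
  have hexp : (-1 + (p : ℝ) - p * q) / (p * q) = ((p : ℝ) - 1) / (p * q) - 1 := by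
    field_simp; ring
  rw [hroot, hexp, Real.rpow_sub_one hp0.ne']
  push_cast
  field_simp

theorem stmt15_general (G : Type*) [Group G] [Fintype G] (p : ℕ) (hp : p.Prime)
    (P H : Subgroup G) [P.Normal] [Fintype P] [Fintype H]
    (hcardP : Fintype.card P = p)
    (hcent : Subgroup.centralizer (P : Set G) = P)
    (hdisj : P ⊓ H = ⊥) (hjoin : P ⊔ H = ⊤) :
    lfun G = (p : ℝ) ^ ((-1 + (p : ℝ) - (p : ℝ) * (Fintype.card H : ℝ)) /
      ((p : ℝ) * (Fintype.card H : ℝ))) * lfun H := by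
  classical
  have hcompl : H.IsComplement' P := isComplement'_of_isCompl
    ⟨disjoint_iff.mpr (by rw [inf_comm, hdisj]), codisjoint_iff.mpr (by rw [sup_comm, hjoin])⟩
  have hcardP' : Nat.card P = p := by rw [Nat.card_eq_fintype_card, hcardP]
  refine lfun_eq_of_prod_orderOf_eq hp.one_lt.le ?_ ?_
  · rw [← Nat.card_eq_fintype_card, ← hcompl.card_mul_card, hcardP', Nat.card_eq_fintype_card,
      mul_comm]
  · rw [prod_orderOf_eq_prod_mul_prod_quotient_pow P fun x hx hx1 =>
        centralizer_singleton_le_of_card_prime (hcardP' ▸ hp) hcent.le hx hx1,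
      prod_orderOf_of_card_eq_prime hp hcardP', hcardP',
      Fintype.prod_equiv hcompl.QuotientMulEquiv.toEquiv _ orderOf fun c =>
        (MulEquiv.orderOf_eq hcompl.QuotientMulEquiv c).symm]

theorem stmt15 (G : Type*) [Group G] [Fintype G] (p : ℕ) (hp : p.Prime) (hodd : Odd p)
    (P H : Subgroup G) [P.Normal] [Fintype P] [Fintype H]
    (hcardP : Fintype.card P = p) (hSyl : ¬ p ∣ P.index)
    (hcent : Subgroup.centralizer (P : Set G) = P)
    (hH : 1 < Fintype.card H) (hdisj : P ⊓ H = ⊥) (hjoin : P ⊔ H = ⊤) :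
    lfun G = (p : ℝ) ^ ((-1 + (p : ℝ) - (p : ℝ) * (Fintype.card H : ℝ)) /
      ((p : ℝ) * (Fintype.card H : ℝ))) * lfun H :=
  stmt15_general G p hp P H hcardP hcent hdisj hjoin
end
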